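/- Let g = 2r+1 with r ≥ 1, and let n ≥ 1 be an integer. In the free abelian group A = ℤ^{2g}, with standard basis written as a_1, …, a_g, b_1, …, b_g, let R be the subgroup generated by the elements a_{r+1}, b_{r+1}, the elements a_i + a_{g+1-i} for all 1 ≤ i ≤ g, the elements b_i + b_{g+1-i} for all 1 ≤ i ≤ g, and the element n·a_1. Then the quotient group A/R is isomorphic (as an additive group) to ℤ^{g-2} × ℤ/nℤ. -/
import Mathlib


/-- The standard basis vector `a_i` (1-based index `i` corresponds to `i : Fin g`
0-based) of the first factor of `ℤ^{2g} = (Fin g → ℤ) × (Fin g → ℤ)`. -/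
def stdA (g : ℕ) (i : Fin g) : (Fin g → ℤ) × (Fin g → ℤ) := (Pi.single i 1, 0)

/-- The standard basis vector `b_i` of the second factor of
`ℤ^{2g} = (Fin g → ℤ) × (Fin g → ℤ)`. -/
def stdB (g : ℕ) (i : Fin g) : (Fin g → ℤ) × (Fin g → ℤ) := (0, Pi.single i 1)

def fmap (r n : ℕ) : ((Fin (2*r+1) → ℤ) × (Fin (2*r+1) → ℤ)) →+ ((Fin (2*r+1-2) → ℤ) × ZMod n) where
  toFun p :=
    (fun k => if (k : ℕ) < r - 1
        then p.1 ⟨(k:ℕ)+1, by have := k.isLt; omega⟩ - p.1 ⟨2*r-1-(k:ℕ), by omega⟩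
        else p.2 ⟨(k:ℕ)-(r-1), by have := k.isLt; omega⟩ -
             p.2 ⟨2*r-((k:ℕ)-(r-1)), by omega⟩,
     ((p.1 ⟨0, by omega⟩ - p.1 ⟨2*r, by omega⟩ : ℤ) : ZMod n))
  map_zero' := by
    refine Prod.ext (funext fun k => ?_) ?_ <;> simp
  map_add' p q := by
    refine Prod.ext (funext fun k => ?_) ?_
    · simp only [Prod.fst_add, Prod.snd_add, Pi.add_apply]
      split_ifs <;> ring
    · simp only [Prod.fst_add, Prod.snd_add, Pi.add_apply]
      push_cast
      ring

lemma fmap_fst (r n : ℕ) (p : (Fin (2*r+1) → ℤ) × (Fin (2*r+1) → ℤ)) (k : Fin (2*r+1-2)) :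
    ((fmap r n) p).1 k = if (k : ℕ) < r - 1
        then p.1 ⟨(k:ℕ)+1, by have := k.isLt; omega⟩ - p.1 ⟨2*r-1-(k:ℕ), by omega⟩
        else p.2 ⟨(k:ℕ)-(r-1), by have := k.isLt; omega⟩ -
             p.2 ⟨2*r-((k:ℕ)-(r-1)), by omega⟩ := rfl

lemma fmap_snd (r n : ℕ) (p : (Fin (2*r+1) → ℤ) × (Fin (2*r+1) → ℤ)) :
    ((fmap r n) p).2 = ((p.1 ⟨0, by omega⟩ - p.1 ⟨2*r, by omega⟩ : ℤ) : ZMod n) := rfl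

lemma fmap_fst' (r n : ℕ) (p : (Fin (2*r+1) → ℤ) × (Fin (2*r+1) → ℤ)) (kv : ℕ)
    (hk : kv < 2*r+1-2) :
    ((fmap r n) p).1 ⟨kv, hk⟩ = if kv < r - 1
        then p.1 ⟨kv+1, by omega⟩ - p.1 ⟨2*r-1-kv, by omega⟩
        else p.2 ⟨kv-(r-1), by omega⟩ - p.2 ⟨2*r-(kv-(r-1)), by omega⟩ := rfl

lemma key_sum {g : ℕ} (σ : Fin g → Fin g) (hσ : Function.Involutive σ)
    (c : Fin g → ℤ) (j : Fin g) :
    (∑ i : Fin g, c i • (Pi.single i (1:ℤ) + Pi.single (σ i) 1) : Fin g → ℤ) j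
      = c j + c (σ j) := by
  rw [Finset.sum_apply]
  simp only [Pi.smul_apply, Pi.add_apply, smul_add, smul_eq_mul, Pi.single_apply,
    mul_ite, mul_one, mul_zero, mul_add]
  rw [Finset.sum_add_distrib]
  congr 1
  · rw [Finset.sum_ite_eq, if_pos (Finset.mem_univ j)]
  · have h : ∀ i : Fin g, (if j = σ i then c i else 0) = (if σ j = i then c i else 0) := by
      intro i
      congr 1
      simp [hσ.eq_iff]
    simp_rw [h]
    rw [Finset.sum_ite_eq, if_pos (Finset.mem_univ (σ j))]


set_option maxHeartbeats 1000000 in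
/-- Let `g = 2r+1` with `r ≥ 1` and `n ≥ 1`.  In `A = ℤ^{2g}`, let `R` be the subgroup
generated by `a_{r+1}`, `b_{r+1}`, the elements `a_i + a_{g+1-i}` (`1 ≤ i ≤ g`),
the elements `b_i + b_{g+1-i}` (`1 ≤ i ≤ g`), and `n • a_1`
(in 0-based indexing: `a_r`, `b_r`, `a_j + a_{g-1-j}`, `b_j + b_{g-1-j}` for `j : Fin g`,
and `n • a_0`, where `g - 1 - j = 2r - j`).
Then `A ⧸ R ≅ ℤ^{g-2} × ℤ/nℤ`. -/
theorem homology_presentation (r n : ℕ) (hr : 1 ≤ r) (hn : 1 ≤ n)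
    (R : AddSubgroup ((Fin (2 * r + 1) → ℤ) × (Fin (2 * r + 1) → ℤ)))
    (hR : R = AddSubgroup.closure
      ({stdA (2 * r + 1) ⟨r, by omega⟩, stdB (2 * r + 1) ⟨r, by omega⟩,
        n • stdA (2 * r + 1) ⟨0, by omega⟩} ∪
       {x | ∃ i : Fin (2 * r + 1),
          x = stdA (2 * r + 1) i + stdA (2 * r + 1) ⟨2 * r - i.val, by omega⟩} ∪
       {x | ∃ i : Fin (2 * r + 1),
          x = stdB (2 * r + 1) i + stdB (2 * r + 1) ⟨2 * r - i.val, by omega⟩})) :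
    Nonempty ((((Fin (2 * r + 1) → ℤ) × (Fin (2 * r + 1) → ℤ)) ⧸ R) ≃+
      ((Fin (2 * r + 1 - 2) → ℤ) × ZMod n)) := by
  have hker : (fmap r n).ker = R := by
    rw [hR]
    apply le_antisymm
    · -- ker ≤ closure
      intro p hp
      rw [AddMonoidHom.mem_ker] at hp
      have h2 : ((p.1 ⟨0, by omega⟩ - p.1 ⟨2*r, by omega⟩ : ℤ) : ZMod n) = 0 := by
        rw [← fmap_snd r n p, hp]; rfl
      rw [ZMod.intCast_zmod_eq_zero_iff_dvd] at h2
      obtain ⟨m, hm⟩ := h2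
      have hv : ∀ (kv : ℕ) (hk : kv < 2*r+1-2), (if kv < r - 1
          then p.1 ⟨kv+1, by omega⟩ - p.1 ⟨2*r-1-kv, by omega⟩
          else p.2 ⟨kv-(r-1), by omega⟩ - p.2 ⟨2*r-(kv-(r-1)), by omega⟩) = 0 := by
        intro kv hk
        rw [← fmap_fst' r n p kv hk, hp]
        rfl
      have hx : ∀ j : ℕ, 1 ≤ j → j < r →
          ∀ (h1 : j < 2*r+1) (h2 : 2*r-j < 2*r+1), p.1 ⟨j, h1⟩ = p.1 ⟨2*r-j, h2⟩ := by
        intro j hj1 hj2 hb1 hb2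
        have := hv (j-1) (by omega)
        rw [if_pos (by omega)] at this
        have e1 : (⟨j-1+1, by omega⟩ : Fin (2*r+1)) = ⟨j, hb1⟩ := by
          simp only [Fin.mk.injEq]; omega
        have e2 : (⟨2*r-1-(j-1), by omega⟩ : Fin (2*r+1)) = ⟨2*r-j, hb2⟩ := by
          simp only [Fin.mk.injEq]; omega
        rw [e1, e2] at this
        linarith
      have hy : ∀ j : ℕ, j < r →
          ∀ (h1 : j < 2*r+1) (h2 : 2*r-j < 2*r+1), p.2 ⟨j, h1⟩ = p.2 ⟨2*r-j, h2⟩ := by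
        intro j hj2 hb1 hb2
        have := hv (r-1+j) (by omega)
        rw [if_neg (by omega)] at this
        have e1 : (⟨r-1+j-(r-1), by omega⟩ : Fin (2*r+1)) = ⟨j, hb1⟩ := by
          simp only [Fin.mk.injEq]; omega
        have e2 : (⟨2*r-(r-1+j-(r-1)), by omega⟩ : Fin (2*r+1)) = ⟨2*r-j, hb2⟩ := by
          simp only [Fin.mk.injEq]; omega
        rw [e1, e2] at this
        linarith
      clear hp
      set σ : Fin (2*r+1) → Fin (2*r+1) := fun i => ⟨2*r - (i:ℕ), by omega⟩ with hσdef
      have hσ : Function.Involutive σ := by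
        intro i; apply Fin.ext; have := i.isLt; simp only [hσdef]; omega
      set cA : Fin (2*r+1) → ℤ := fun i => if r < (i:ℕ) then p.1 i else 0 with hcA
      set cB : Fin (2*r+1) → ℤ := fun i => if r < (i:ℕ) then p.2 i else 0 with hcB
      have heq : p = (∑ i : Fin (2*r+1), cA i • (stdA (2*r+1) i + stdA (2*r+1) (σ i)))
          + p.1 ⟨r, by omega⟩ • stdA (2*r+1) ⟨r, by omega⟩
          + (m * (n:ℤ)) • stdA (2*r+1) ⟨0, by omega⟩
          + (∑ i : Fin (2*r+1), cB i • (stdB (2*r+1) i + stdB (2*r+1) (σ i)))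
          + p.2 ⟨r, by omega⟩ • stdB (2*r+1) ⟨r, by omega⟩ := by
        have hsumA : ∀ j, (∑ i : Fin (2*r+1), cA i • (stdA (2*r+1) i + stdA (2*r+1) (σ i))).1 j
            = cA j + cA (σ j) := by
          intro j
          rw [Prod.fst_sum]
          have h : ∀ i : Fin (2*r+1), (cA i • (stdA (2*r+1) i + stdA (2*r+1) (σ i))).1
              = cA i • (Pi.single i (1:ℤ) + Pi.single (σ i) 1) := by
            intro i; simp [stdA]
          simp_rw [h]
          exact key_sum σ hσ cA j
        have hsumB : ∀ j, (∑ i : Fin (2*r+1), cB i • (stdB (2*r+1) i + stdB (2*r+1) (σ i))).2 j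
            = cB j + cB (σ j) := by
          intro j
          rw [Prod.snd_sum]
          have h : ∀ i : Fin (2*r+1), (cB i • (stdB (2*r+1) i + stdB (2*r+1) (σ i))).2
              = cB i • (Pi.single i (1:ℤ) + Pi.single (σ i) 1) := by
            intro i; simp [stdB]
          simp_rw [h]
          exact key_sum σ hσ cB j
        have hzeroB : (∑ i : Fin (2*r+1), cB i • (stdB (2*r+1) i + stdB (2*r+1) (σ i))).1
            = 0 := by
          rw [Prod.fst_sum]
          simp [stdB]
        have hzeroA : (∑ i : Fin (2*r+1), cA i • (stdA (2*r+1) i + stdA (2*r+1) (σ i))).2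
            = 0 := by
          rw [Prod.snd_sum]
          simp [stdA]
        refine Prod.ext (funext fun j => ?_) (funext fun j => ?_)
        · simp only [Prod.fst_add, Pi.add_apply, hsumA, hzeroB, Pi.zero_apply, add_zero]
          simp only [stdA, stdB, Prod.smul_fst, Pi.smul_apply, Pi.single_apply,
            smul_eq_mul, Prod.fst_zero, Pi.zero_apply, mul_zero, mul_ite, mul_one]
          rcases j with ⟨jv, hj⟩
          simp only [hcA, hσdef, Fin.mk.injEq]
          by_cases h0 : jv = 0
          · subst h0
            rw [if_neg (by omega), if_pos (by omega), if_neg (by omega), if_pos rfl]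
            have e2 : (⟨2*r-0, by omega⟩ : Fin (2*r+1)) = ⟨2*r, by omega⟩ := by
              simp only [Fin.mk.injEq]; omega
            rw [e2]
            linarith [hm]
          · by_cases hlt : jv < r
            · rw [if_neg (by omega), if_pos (by omega), if_neg (by omega), if_neg h0]
              have := hx jv (by omega) hlt hj (by omega)
              simpa using this
            · by_cases heqr : jv = r
              · rw [if_neg (by omega), if_neg (by omega), if_pos heqr, if_neg (by omega)]
                have e : (⟨r, by omega⟩ : Fin (2*r+1)) = ⟨jv, hj⟩ := by
                  simp only [Fin.mk.injEq]; omega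
                rw [e]; ring
              · rw [if_pos (by omega), if_neg (by omega), if_neg heqr, if_neg h0]
                ring
        · simp only [Prod.snd_add, Pi.add_apply, hsumB, hzeroA, Pi.zero_apply, add_zero,
            zero_add]
          simp only [stdA, stdB, Prod.smul_snd, Pi.smul_apply, Pi.single_apply,
            smul_eq_mul, Prod.snd_zero, Pi.zero_apply, mul_zero, mul_ite, mul_one,
            smul_zero, add_zero]
          rcases j with ⟨jv, hj⟩
          simp only [hcB, hσdef, Fin.mk.injEq]
          by_cases hlt : jv < r
          · rw [if_neg (by omega), if_pos (by omega), if_neg (by omega)]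
            have := hy jv hlt hj (by omega)
            simpa using this
          · by_cases heqr : jv = r
            · rw [if_neg (by omega), if_neg (by omega), if_pos heqr]
              have e : (⟨r, by omega⟩ : Fin (2*r+1)) = ⟨jv, hj⟩ := by
                simp only [Fin.mk.injEq]; omega
              rw [e]; ring
            · rw [if_pos (by omega), if_neg (by omega), if_neg heqr]
              ring
      rw [heq]
      refine add_mem (add_mem (add_mem (add_mem ?_ ?_) ?_) ?_) ?_
      · refine sum_mem fun i _ => zsmul_mem (AddSubgroup.subset_closure ?_) _
        simp only [Set.mem_union, Set.mem_insert_iff, Set.mem_singleton_iff,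
          Set.mem_setOf_eq]
        exact Or.inl (Or.inr ⟨i, rfl⟩)
      · refine zsmul_mem (AddSubgroup.subset_closure ?_) _
        simp only [Set.mem_union, Set.mem_insert_iff, Set.mem_singleton_iff,
          Set.mem_setOf_eq]
        tauto
      · rw [show ((m * (n:ℤ)) • stdA (2*r+1) ⟨0, by omega⟩)
            = m • ((n:ℤ) • stdA (2*r+1) ⟨0, by omega⟩) from (smul_smul m (n:ℤ) _).symm,
          natCast_zsmul]
        refine zsmul_mem (AddSubgroup.subset_closure ?_) _
        simp only [Set.mem_union, Set.mem_insert_iff, Set.mem_singleton_iff,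
          Set.mem_setOf_eq]
        tauto
      · refine sum_mem fun i _ => zsmul_mem (AddSubgroup.subset_closure ?_) _
        simp only [Set.mem_union, Set.mem_insert_iff, Set.mem_singleton_iff,
          Set.mem_setOf_eq]
        exact Or.inr ⟨i, rfl⟩
      · refine zsmul_mem (AddSubgroup.subset_closure ?_) _
        simp only [Set.mem_union, Set.mem_insert_iff, Set.mem_singleton_iff,
          Set.mem_setOf_eq]
        tauto
    · -- closure ≤ ker
      rw [AddSubgroup.closure_le]
      rintro x hx
      simp only [Set.mem_union, Set.mem_insert_iff, Set.mem_singleton_iff,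
        Set.mem_setOf_eq] at hx
      rw [SetLike.mem_coe, AddMonoidHom.mem_ker]
      rcases hx with ((rfl | rfl | rfl) | ⟨i, rfl⟩) | ⟨i, rfl⟩
      · refine Prod.ext (funext fun k => ?_) ?_
        · have hk := k.isLt
          rw [fmap_fst]
          simp only [stdA, Pi.single_apply, Pi.zero_apply, Fin.mk.injEq, Prod.fst_zero]
          split_ifs <;> simp only [Fin.ext_iff, Fin.val_mk] at * <;> omega
        · rw [fmap_snd]
          simp only [stdA, Pi.single_apply, Fin.mk.injEq, Prod.snd_zero]
          rw [if_neg (by omega), if_neg (by omega)]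
          simp
      · refine Prod.ext (funext fun k => ?_) ?_
        · have hk := k.isLt
          rw [fmap_fst]
          simp only [stdB, Pi.single_apply, Pi.zero_apply, Fin.mk.injEq, Prod.fst_zero]
          split_ifs <;> simp only [Fin.ext_iff, Fin.val_mk] at * <;> omega
        · rw [fmap_snd]
          simp [stdB]
      · have hns : n • stdA (2*r+1) (⟨0, by omega⟩ : Fin (2*r+1))
            = (Pi.single (⟨0, by omega⟩ : Fin (2*r+1)) (n:ℤ), 0) := by
          refine Prod.ext (funext fun j => ?_) ?_
          · simp only [stdA, Prod.smul_fst, Pi.smul_apply, Pi.single_apply]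
            split_ifs <;> simp
          · simp [stdA]
        rw [hns]
        refine Prod.ext (funext fun k => ?_) ?_
        · have hk := k.isLt
          rw [fmap_fst]
          simp only [Pi.single_apply, Prod.fst_zero, Pi.zero_apply, Fin.mk.injEq]
          split_ifs <;> simp only [Fin.ext_iff, Fin.val_mk] at * <;> omega
        · rw [fmap_snd]
          simp only [Pi.single_apply]
          rw [if_pos trivial, if_neg (by simp only [Fin.mk.injEq]; omega)]
          simp
      · have hi := i.isLt
        refine Prod.ext (funext fun k => ?_) ?_
        · have hk := k.isLt
          rw [fmap_fst]
          simp only [stdA, Prod.fst_add, Prod.snd_add, Pi.add_apply, Pi.single_apply,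
            Pi.zero_apply, Fin.mk.injEq, Prod.fst_zero, add_zero]
          split_ifs <;> simp only [Fin.ext_iff, Fin.val_mk] at * <;> omega
        · rw [fmap_snd]
          simp only [stdA, Prod.fst_add, Pi.add_apply, Pi.single_apply, Fin.mk.injEq,
            Prod.snd_zero]
          split_ifs <;> simp only [Fin.ext_iff, Fin.val_mk] at * <;>
            first | (exfalso; omega) | norm_num
      · have hi := i.isLt
        refine Prod.ext (funext fun k => ?_) ?_
        · have hk := k.isLt
          rw [fmap_fst]
          simp only [stdB, Prod.snd_add, Pi.add_apply, Pi.single_apply, Pi.zero_apply,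
            Fin.mk.injEq, Prod.fst_zero, Prod.fst_add, add_zero]
          split_ifs <;> simp only [Fin.ext_iff, Fin.val_mk] at * <;> omega
        · rw [fmap_snd]
          simp [stdB]
  have hsurj : Function.Surjective (fmap r n) := by
    rintro ⟨v, c⟩
    obtain ⟨c', rfl⟩ := ZMod.intCast_surjective c
    refine ⟨(fun i => if (i:ℕ) = 0 then c' else if h : (i:ℕ) < r then v ⟨(i:ℕ)-1, by omega⟩ else 0,
      fun i => if h : (i:ℕ) < r then v ⟨r-1+(i:ℕ), by omega⟩ else 0), ?_⟩
    refine Prod.ext (funext fun k => ?_) ?_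
    · have hk := k.isLt
      rw [fmap_fst]
      dsimp only
      by_cases h : (k:ℕ) < r - 1
      · rw [if_pos h, if_neg (by omega), dif_pos (by omega), if_neg (by omega),
          dif_neg (by omega), sub_zero]
        exact congrArg v (by simp only [Fin.ext_iff, Fin.val_mk]; omega)
      · rw [if_neg h, dif_pos (by omega), dif_neg (by omega), sub_zero]
        exact congrArg v (by simp only [Fin.ext_iff, Fin.val_mk]; omega)
    · rw [fmap_snd]
      dsimp only
      rw [if_pos rfl, if_neg (by omega), dif_neg (by omega), sub_zero]
  subst hker
  exact ⟨QuotientAddGroup.quotientKerEquivOfSurjective _ hsurj⟩
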